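/- arXiv:1302.3965 — 3 statements merged into one kernel-verified Lean document; each statement's English description precedes it below -/
import Mathlib

section
/- Let X, Y be real Banach spaces, T : X → Y and S : Y → X bounded homogeneous operators such that T is quasi-additive on R(S) and S is quasi-additive on R(T). Then I_Y + T∘S has a bounded homogeneous two-sided inverse (i.e. there is a bounded homogeneous Φ : Y → Y with (I_Y + TS)Φ = Φ(I_Y + TS) = I_Y) if and only if I_X + S∘T has a bounded homogeneous two-sided inverse. -/
open Metric Set

variable {X Y : Type*} [NormedAddCommGroup X] [NormedSpace ℝ X]
  [NormedAddCommGroup Y] [NormedSpace ℝ Y]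

/-- `F` is a bounded homogeneous operator: `F (c • x) = c • F x` for all real `c`,
and `F` maps bounded sets to bounded sets (equivalently, `‖F x‖ ≤ M * ‖x‖`). -/
def BddHomOp (F : X → Y) : Prop :=
  (∀ (c : ℝ) (x : X), F (c • x) = c • F x) ∧ ∃ M : ℝ, ∀ x, ‖F x‖ ≤ M * ‖x‖

/-- The norm of a (homogeneous) map: `sup {‖F x‖ : ‖x‖ = 1}`. -/
noncomputable def hnorm (F : X → Y) : ℝ :=
  sSup ((fun x => ‖F x‖) '' {x : X | ‖x‖ = 1})

/-- `F` is quasi-additive on the subset `M`. -/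
def QuasiAdditiveOn (F : X → Y) (M : Set X) : Prop :=
  ∀ x : X, ∀ z ∈ M, F (x + z) = F x + F z

/-- `S` is a bounded homogeneous generalized inverse of `T`: `T S T = T` and `S T S = S`. -/
def GenInv (T : X →L[ℝ] Y) (S : Y → X) : Prop :=
  BddHomOp S ∧ (∀ x, T (S (T x)) = T x) ∧ (∀ y, S (T (S y)) = S y)

/-- A subset `V` is Chebyshev: every point has a unique nearest point in `V`. -/
def IsChebyshev (V : Set X) : Prop :=
  ∀ x : X, ∃! v, v ∈ V ∧ ‖x - v‖ = Metric.infDist x V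

/-- `p` is the metric projector onto `V`: `p x ∈ V` is a nearest point to `x` in `V`. -/
def IsMetricProjOn (V : Set X) (p : X → X) : Prop :=
  ∀ x, p x ∈ V ∧ ‖x - p x‖ = Metric.infDist x V

/-- `TH` is a quasi-linear projector generalized inverse of `T`. -/
def QLPGenInv (T : X →L[ℝ] Y) (TH : Y → X) : Prop :=
  BddHomOp TH ∧ (∀ x, T (TH (T x)) = T x) ∧ (∀ y, TH (T (TH y)) = TH y) ∧
  (∃ P : X →L[ℝ] X, (∀ x, P (P x) = P x) ∧ Set.range ⇑P = {x : X | T x = 0} ∧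
    ∀ x, TH (T x) = x - P x) ∧
  (∃ Q : Y → Y, BddHomOp Q ∧ (∀ y, Q (Q y) = Q y) ∧ QuasiAdditiveOn Q (Set.range Q) ∧
    Set.range Q = Set.range ⇑T ∧ ∀ y, T (TH y) = Q y)

section

variable {Z : Type*} [NormedAddCommGroup Z] [NormedSpace ℝ Z]

def HasBddHomInv (F : X → X) : Prop :=
  ∃ Φ : X → X, BddHomOp Φ ∧ (∀ x, F (Φ x) = x) ∧ ∀ x, Φ (F x) = x

namespace BddHomOp

lemma map_neg {F : X → Y} (hF : BddHomOp F) (x : X) : F (-x) = -F x := by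
  simpa using hF.1 (-1) x

lemma exists_nonneg_bound {F : X → Y} (hF : BddHomOp F) :
    ∃ M, 0 ≤ M ∧ ∀ x, ‖F x‖ ≤ M * ‖x‖ := by
  obtain ⟨M, hM⟩ := hF.2
  exact ⟨max M 0, le_max_right _ _, fun x =>
    (hM x).trans (mul_le_mul_of_nonneg_right (le_max_left _ _) (norm_nonneg x))⟩

lemma id : BddHomOp (fun x : X => x) :=
  ⟨fun _ _ => rfl, 1, fun x => (one_mul ‖x‖).ge⟩

lemma comp {G : Y → Z} {F : X → Y} (hG : BddHomOp G) (hF : BddHomOp F) :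
    BddHomOp (G ∘ F) := by
  obtain ⟨MG, hMG0, hMG⟩ := hG.exists_nonneg_bound
  obtain ⟨MF, -, hMF⟩ := hF.exists_nonneg_bound
  refine ⟨fun c x => by simp only [Function.comp_apply, hF.1, hG.1], MG * MF, fun x => ?_⟩
  calc ‖G (F x)‖ ≤ MG * ‖F x‖ := hMG _
    _ ≤ MG * (MF * ‖x‖) := mul_le_mul_of_nonneg_left (hMF x) hMG0
    _ = MG * MF * ‖x‖ := (mul_assoc _ _ _).symm

lemma sub {F G : X → Y} (hF : BddHomOp F) (hG : BddHomOp G) :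
    BddHomOp (fun x => F x - G x) := by
  obtain ⟨MF, -, hMF⟩ := hF.exists_nonneg_bound
  obtain ⟨MG, -, hMG⟩ := hG.exists_nonneg_bound
  refine ⟨fun c x => by simp only [hF.1, hG.1, smul_sub], MF + MG, fun x => ?_⟩
  calc ‖F x - G x‖ ≤ ‖F x‖ + ‖G x‖ := norm_sub_le _ _
    _ ≤ MF * ‖x‖ + MG * ‖x‖ := add_le_add (hMF x) (hMG x)
    _ = (MF + MG) * ‖x‖ := (add_mul _ _ _).symm

end BddHomOp

lemma QuasiAdditiveOn.map_sub_of_bddHomOp {T : X → Y} {S : Y → X}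
    (hT : BddHomOp T) (hS : BddHomOp S) (hTq : QuasiAdditiveOn T (Set.range S)) (x : X) (y : Y) :
    T (x - S y) = T x - T (S y) := by
  rw [sub_eq_add_neg, ← hS.map_neg, hTq x _ ⟨-y, rfl⟩, hS.map_neg, hT.map_neg, sub_eq_add_neg]

/-- As for linear maps, `(I + S T)⁻¹ = I - S Φ T` with `Φ = (I + T S)⁻¹`; quasi-additivity of `T` on
`R(S)` is all the linearity this identity needs. -/
lemma HasBddHomInv.add_comp_swap {T : X → Y} {S : Y → X}
    (hT : BddHomOp T) (hS : BddHomOp S) (hTq : QuasiAdditiveOn T (Set.range S))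
    (h : HasBddHomInv fun y => y + T (S y)) : HasBddHomInv fun x => x + S (T x) := by
  obtain ⟨Φ, hΦ, hΦ_right, hΦ_left⟩ := h
  refine ⟨fun x => x - S (Φ (T x)), BddHomOp.id.sub (hS.comp (hΦ.comp hT)), fun x => ?_,
    fun x => ?_⟩
  · have hTΨ : T (x - S (Φ (T x))) = Φ (T x) := by
      rw [hTq.map_sub_of_bddHomOp hT hS]
      exact sub_eq_of_eq_add (hΦ_right (T x)).symm
    simp only [hTΨ, sub_add_cancel]
  · simp only [hTq x _ ⟨T x, rfl⟩, hΦ_left, add_sub_cancel_right]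

end

theorem stmt_4_general (T : X → Y) (S : Y → X)
    (hT : BddHomOp T) (hS : BddHomOp S)
    (hTq : QuasiAdditiveOn T (Set.range S)) (hSq : QuasiAdditiveOn S (Set.range T)) :
    (∃ Φ : Y → Y, BddHomOp Φ ∧ (∀ y, Φ y + T (S (Φ y)) = y) ∧ (∀ y, Φ (y + T (S y)) = y)) ↔
    (∃ Ψ : X → X, BddHomOp Ψ ∧ (∀ x, Ψ x + S (T (Ψ x)) = x) ∧ (∀ x, Ψ (x + S (T x)) = x)) :=
  ⟨HasBddHomInv.add_comp_swap hT hS hTq, HasBddHomInv.add_comp_swap hS hT hSq⟩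

theorem stmt_4 [CompleteSpace X] [CompleteSpace Y] (T : X → Y) (S : Y → X)
    (hT : BddHomOp T) (hS : BddHomOp S)
    (hTq : QuasiAdditiveOn T (Set.range S)) (hSq : QuasiAdditiveOn S (Set.range T)) :
    (∃ Φ : Y → Y, BddHomOp Φ ∧ (∀ y, Φ y + T (S (Φ y)) = y) ∧ (∀ y, Φ (y + T (S y)) = y)) ↔
    (∃ Ψ : X → X, BddHomOp Ψ ∧ (∀ x, Ψ x + S (T (Ψ x)) = x) ∧ (∀ x, Ψ (x + S (T x)) = x)) :=
  stmt_4_general T S hT hS hTq hSq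
end

section
/- Let X, Y be real Banach spaces, T ∈ B(X,Y) with a bounded homogeneous generalized inverse T^h : Y → X, and let δT ∈ B(X,Y) be such that T^h is quasi-additive on R(δT) and ‖T^h δT‖ < 1 (so that I_X + T^h δT is invertible in B(X,X)). Put T̄ = T + δT. If R(δT) ⊆ R(T), then T̄ has a bounded homogeneous generalized inverse given by T̄^h = T^h ∘ (I_Y + δT T^h)^{-1} = (I_X + T^h δT)^{-1} ∘ T^h. -/
open Metric Set

variable {X Y : Type*} [NormedAddCommGroup X] [NormedSpace ℝ X]
  [NormedAddCommGroup Y] [NormedSpace ℝ Y]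

/-!
Write `A = Tʰ δT`. Since `R(δT) ⊆ R(T)` we have `T A = δT`, so `T̄ = T (I + A)`, and
quasi-additivity of `Tʰ` on `R(δT)` gives `Tʰ T̄ = Tʰ T + A`. With `B = (I + A)⁻¹` the map
`B ∘ Tʰ` is then a generalized inverse of `T̄`, and the push-through identity
`(I + δT Tʰ)⁻¹ = I - δT B Tʰ` identifies it with `Tʰ (I + δT Tʰ)⁻¹`.
-/

theorem BddHomOp.clm_comp {Z : Type*} [NormedAddCommGroup Z] [NormedSpace ℝ Z]
    {F : X → Y} (hF : BddHomOp F) (B : Y →L[ℝ] Z) : BddHomOp (B ∘ F) := by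
  obtain ⟨hhom, M, hM⟩ := hF
  refine ⟨fun c x => by simp [hhom], ‖B‖ * max M 0, fun x => ?_⟩
  calc ‖B (F x)‖ ≤ ‖B‖ * ‖F x‖ := B.le_opNorm _
    _ ≤ ‖B‖ * (max M 0 * ‖x‖) := by
        gcongr
        exact (hM x).trans (by gcongr; exact le_max_left M 0)
    _ = ‖B‖ * max M 0 * ‖x‖ := by ring

theorem QuasiAdditiveOn.map_sub {F : X → Y} {M : Set X} (h : QuasiAdditiveOn F M)
    (hF : ∀ (c : ℝ) (x : X), F (c • x) = c • F x) (x : X) {z : X} (hz : -z ∈ M) :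
    F (x - z) = F x - F z := by
  have hneg : F (-z) = -F z := by simpa using hF (-1) z
  rw [sub_eq_add_neg, h x (-z) hz, hneg, sub_eq_add_neg]

theorem GenInv.apply_apply_of_mem_range {T : X →L[ℝ] Y} {S : Y → X} (hS : GenInv T S) {y : Y}
    (hy : y ∈ Set.range ⇑T) : T (S y) = y := by
  obtain ⟨x, rfl⟩ := hy
  exact hS.2.1 x

theorem exists_inverse_one_add_of_norm_lt_one [CompleteSpace X] {A : X →L[ℝ] X}
    (hA : ‖A‖ < 1) :
    ∃ B : X →L[ℝ] X, (∀ x, B x + A (B x) = x) ∧ ∀ x, B (x + A x) = x := by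
  set u := Units.oneSub (-A) (by simpa using hA)
  have hu : (u : X →L[ℝ] X) = 1 + A := by simp [u, Units.oneSub, sub_neg_eq_add]
  refine ⟨↑u⁻¹, fun x => ?_, fun x => ?_⟩
  · simpa [hu] using congrArg (· x) u.mul_inv
  · simpa [hu] using congrArg (· x) u.inv_mul

section Perturbation

variable {T δT : X →L[ℝ] Y} {S : Y → X} {A B : X →L[ℝ] X}

theorem apply_add_perturbation (hq : QuasiAdditiveOn S (Set.range ⇑δT))
    (hA : ∀ x, A x = S (δT x)) (y : Y) (v : X) : S (y + δT v) = S y + A v := by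
  rw [hq y (δT v) ⟨v, rfl⟩, hA]

theorem apply_sub_perturbation (hS : ∀ (c : ℝ) (y : Y), S (c • y) = c • S y)
    (hq : QuasiAdditiveOn S (Set.range ⇑δT))
    (hA : ∀ x, A x = S (δT x)) (y : Y) (v : X) : S (y - δT v) = S y - A v := by
  rw [hq.map_sub hS y ⟨-v, map_neg δT v⟩, hA]

theorem apply_sub_perturbation_inverse (hS : ∀ (c : ℝ) (y : Y), S (c • y) = c • S y)
    (hq : QuasiAdditiveOn S (Set.range ⇑δT))
    (hA : ∀ x, A x = S (δT x)) (hBA : ∀ x, B x + A (B x) = x) (y : Y) :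
    S (y - δT (B (S y))) = B (S y) := by
  rw [apply_sub_perturbation hS hq hA, sub_eq_iff_eq_add, hBA]

theorem GenInv.perturbation (hS : GenInv T S) (hq : QuasiAdditiveOn S (Set.range ⇑δT))
    (hA : ∀ x, A x = S (δT x)) (hran : Set.range ⇑δT ⊆ Set.range ⇑T)
    (hBA : ∀ x, B x + A (B x) = x) (hAB : ∀ x, B (x + A x) = x) :
    GenInv (T + δT) (B ∘ S) := by
  have hTA : ∀ x, T (A x) = δT x := fun x => by
    rw [hA, hS.apply_apply_of_mem_range (hran ⟨x, rfl⟩)]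
  have hSTbar : ∀ v, S ((T + δT) v) = S (T v) + A v := fun v =>
    apply_add_perturbation hq hA (T v) v
  have hTbar : ∀ v, (T + δT) v = T (v + A v) := fun v => by
    rw [add_apply, map_add, hTA]
  refine ⟨hS.1.clm_comp B, fun x => ?_, fun y => ?_⟩
  · simp only [Function.comp_apply]
    rw [hSTbar, hTbar, hBA, map_add, hS.2.1, hTA, add_apply]
  · have hBS : S (T (B (S y))) = B (S y) := by
      rw [← apply_sub_perturbation_inverse hS.1.1 hq hA hBA y, hS.2.2]
    simp only [Function.comp_apply]
    rw [hSTbar, hBS, hAB]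

end Perturbation

theorem stmt_10_general [CompleteSpace X] (T δT : X →L[ℝ] Y)
    (Th : Y → X) (hTh : GenInv T Th)
    (hq : QuasiAdditiveOn Th (Set.range ⇑δT))
    (A : X →L[ℝ] X) (hA : ∀ x, A x = Th (δT x)) (hAn : ‖A‖ < 1)
    (hran : Set.range ⇑δT ⊆ Set.range ⇑T) :
    ∃ Ψ : Y → Y, (∀ y, Ψ y + δT (Th (Ψ y)) = y) ∧ (∀ y, Ψ (y + δT (Th y)) = y) ∧
      GenInv (T + δT) (fun y => Th (Ψ y)) ∧
      (∀ y, Th (Ψ y) + A (Th (Ψ y)) = Th y) := by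
  obtain ⟨B, hBA, hAB⟩ := exists_inverse_one_add_of_norm_lt_one hAn
  have hΨ := apply_sub_perturbation_inverse hTh.1.1 hq hA hBA
  refine ⟨fun y => y - δT (B (Th y)), fun y => ?_, fun y => ?_, ?_, fun y => ?_⟩
  · rw [hΨ, sub_add_cancel]
  · simp only [apply_add_perturbation hq hA, hAB, add_sub_cancel_right]
  · rw [show (fun y => Th (y - δT (B (Th y)))) = B ∘ Th from funext hΨ]
    exact hTh.perturbation hq hA hran hBA hAB
  · rw [hΨ, hBA]

theorem stmt_10 [CompleteSpace X] [CompleteSpace Y] (T δT : X →L[ℝ] Y)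
    (Th : Y → X) (hTh : GenInv T Th)
    (hq : QuasiAdditiveOn Th (Set.range ⇑δT))
    (A : X →L[ℝ] X) (hA : ∀ x, A x = Th (δT x)) (hAn : ‖A‖ < 1)
    (hran : Set.range ⇑δT ⊆ Set.range ⇑T) :
    ∃ Ψ : Y → Y, (∀ y, Ψ y + δT (Th (Ψ y)) = y) ∧ (∀ y, Ψ (y + δT (Th y)) = y) ∧
      GenInv (T + δT) (fun y => Th (Ψ y)) ∧
      (∀ y, Th (Ψ y) + A (Th (Ψ y)) = Th y) :=
  stmt_10_general T δT Th hTh hq A hA hAn hran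
end

section
/- Let X, Y be real Banach spaces and T ∈ B(X,Y) with T ≠ 0 and R(T) closed. Assume N(T) ⊆ X and R(T) ⊆ Y are Chebyshev subspaces, so the Moore–Penrose metric generalized inverse T^M exists. Let δT ∈ B(X,Y) be such that T^M is quasi-additive on R(δT) and ‖T^M δT‖ < 1, and put T̄ = T + δT. Suppose N(T̄) and the closure of R(T̄) are Chebyshev subspaces of X and Y respectively, and R(T̄) ∩ N(T^M) = {0}. Then R(T̄) is closed in Y, T̄ has a Moore–Penrose metric generalized inverse given by T̄^M = (I_X − π_{N(T̄)}) ∘ (I_X + T^M δT)^{-1} ∘ T^M ∘ π_{R(T̄)}, and ‖T̄^M‖ ≤ 2‖T^M‖/(1 − ‖T^M δT‖). -/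
open Metric Set

variable {X Y : Type*} [NormedAddCommGroup X] [NormedSpace ℝ X]
  [NormedAddCommGroup Y] [NormedSpace ℝ Y]

/-!
Write `T̄ = T + δT` and `B = (1 + T^M δT)⁻¹`, a Neumann series with `‖B‖ ≤ (1 - ‖T^M δT‖)⁻¹`.
Quasi-additivity of `T^M` on `R(δT)` gives `T^M T̄ = 1 + T^M δT - π_{N(T)}`, hence
`B T^M T̄ x = x - B π_{N(T)} x`. Moreover `B` maps `N(T)` into `N(T̄)`: for `n ∈ N(T)` one finds
`π_{N(T)} (B n) = n`, so `T^M` kills `T̄ (B n) ∈ R(T̄)`, which forces `T̄ (B n) = 0` since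
`R(T̄) ∩ N(T^M) = {0}`. Therefore `G = B T^M` is a bounded homogeneous inner inverse of `T̄`
(`T̄ G T̄ = T̄`). Such an inner inverse forces `R(T̄)` to be closed, and yields the Moore–Penrose
metric inverse `(1 - π_{N(T̄)}) G π_{R(T̄)}`, whose norm is at most `2 ‖G‖` because metric
projectors onto subspaces have norm at most `2`.
-/

namespace IsMetricProjOn

variable {K : Submodule ℝ X} {p : X → X}

theorem eq_of_mem (hK : IsChebyshev (K : Set X)) (hp : IsMetricProjOn K p) {x v : X}
    (hv : v ∈ K) (hd : ‖x - v‖ = infDist x K) : p x = v :=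
  (hK x).unique (hp x) ⟨hv, hd⟩

theorem apply_of_mem (hK : IsChebyshev (K : Set X)) (hp : IsMetricProjOn K p) {x : X}
    (hx : x ∈ K) : p x = x :=
  hp.eq_of_mem hK hx (by rw [sub_self, norm_zero, infDist_zero_of_mem hx])

theorem norm_sub_apply_le (hp : IsMetricProjOn K p) (x : X) : ‖x - p x‖ ≤ ‖x‖ := by
  rw [(hp x).2, ← dist_zero_right x]
  exact infDist_le_dist_of_mem K.zero_mem

theorem norm_apply_le (hp : IsMetricProjOn K p) (x : X) : ‖p x‖ ≤ 2 * ‖x‖ :=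
  calc ‖p x‖ = ‖x - (x - p x)‖ := by rw [sub_sub_cancel]
    _ ≤ ‖x‖ + ‖x - p x‖ := norm_sub_le _ _
    _ ≤ 2 * ‖x‖ := by linarith [hp.norm_sub_apply_le x]

theorem apply_add_of_mem (hK : IsChebyshev (K : Set X)) (hp : IsMetricProjOn K p) (x : X)
    {v : X} (hv : v ∈ K) : p (x + v) = p x + v := by
  have hKv : (· + v) '' (K : Set X) = K := by
    ext y
    simp [Set.image_add_right, K.add_mem_iff_left (K.neg_mem hv)]
  refine hp.eq_of_mem hK (K.add_mem (hp x).1 hv) ?_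
  rw [add_sub_add_right_eq_sub, (hp x).2, ← infDist_image (isometry_add_right v), hKv]

open scoped Pointwise in
theorem apply_smul (hK : IsChebyshev (K : Set X)) (hp : IsMetricProjOn K p) (c : ℝ) (x : X) :
    p (c • x) = c • p x := by
  rcases eq_or_ne c 0 with rfl | hc
  · simp only [zero_smul]
    exact hp.apply_of_mem hK K.zero_mem
  have hKc : c • (K : Set X) = K := by
    ext y
    simp [Set.mem_smul_set_iff_inv_smul_mem₀ hc, K.smul_mem_iff (inv_ne_zero hc)]
  refine hp.eq_of_mem hK (K.smul_mem c (hp x).1) ?_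
  rw [← smul_sub, norm_smul, (hp x).2, ← infDist_smul₀ hc, hKc]

theorem apply_neg (hK : IsChebyshev (K : Set X)) (hp : IsMetricProjOn K p) (x : X) :
    p (-x) = -p x := by
  simpa using hp.apply_smul hK (-1) x

theorem apply_sub_apply (hK : IsChebyshev (K : Set X)) (hp : IsMetricProjOn K p) (x : X) :
    p (x - p x) = 0 := by
  rw [sub_eq_add_neg, hp.apply_add_of_mem hK x (K.neg_mem (hp x).1), add_neg_cancel]

end IsMetricProjOn

section hnorm

variable {E F : Type*} [NormedAddCommGroup E] [NormedAddCommGroup F]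

theorem hnorm_nonneg (f : E → F) : 0 ≤ hnorm f :=
  Real.sSup_nonneg <| by
    rintro _ ⟨x, -, rfl⟩
    exact norm_nonneg _

theorem hnorm_le_of_forall {f : E → F} {C : ℝ} (hC : 0 ≤ C) (h : ∀ x, ‖f x‖ ≤ C * ‖x‖) :
    hnorm f ≤ C :=
  Real.sSup_le (by rintro _ ⟨x, hx, rfl⟩; simpa [show ‖x‖ = 1 from hx] using h x) hC

end hnorm

namespace BddHomOp

variable {F : X → Y}

theorem map_zero (hF : BddHomOp F) : F 0 = 0 := by
  simpa using hF.1 0 0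

theorem norm_apply_le (hF : BddHomOp F) (x : X) : ‖F x‖ ≤ hnorm F * ‖x‖ := by
  rcases eq_or_ne x 0 with rfl | hx
  · simp [hF.map_zero]
  obtain ⟨M, hM⟩ := hF.2
  have hbdd : BddAbove ((fun x => ‖F x‖) '' {x : X | ‖x‖ = 1}) := by
    refine ⟨M, ?_⟩
    rintro _ ⟨u, hu, rfl⟩
    simpa [show ‖u‖ = 1 from hu] using hM u
  have hunit : ‖‖x‖⁻¹ • x‖ = 1 := norm_smul_inv_norm hx
  calc ‖F x‖ = ‖x‖ * ‖F (‖x‖⁻¹ • x)‖ := by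
        rw [hF.1, norm_smul, norm_inv, norm_norm, mul_inv_cancel_left₀ (norm_ne_zero_iff.2 hx)]
    _ ≤ ‖x‖ * hnorm F := by gcongr; exact le_csSup hbdd ⟨_, hunit, rfl⟩
    _ = hnorm F * ‖x‖ := mul_comm _ _

theorem clm_comp_s11 {Z : Type*} [NormedAddCommGroup Z] [NormedSpace ℝ Z] (hF : BddHomOp F)
    (B : Y →L[ℝ] Z) : BddHomOp (fun x => B (F x)) := by
  obtain ⟨M, hM⟩ := hF.2
  refine ⟨fun c x => show B (F (c • x)) = c • B (F x) by rw [hF.1, map_smul], ‖B‖ * M,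
    fun x => ?_⟩
  calc ‖B (F x)‖ ≤ ‖B‖ * ‖F x‖ := B.le_opNorm _
    _ ≤ ‖B‖ * (M * ‖x‖) := by gcongr; exact hM x
    _ = ‖B‖ * M * ‖x‖ := by ring

theorem hnorm_clm_comp_le {Z : Type*} [NormedAddCommGroup Z] [NormedSpace ℝ Z]
    (hF : BddHomOp F) (B : Y →L[ℝ] Z) : hnorm (fun x => B (F x)) ≤ ‖B‖ * hnorm F :=
  hnorm_le_of_forall (by positivity [hnorm_nonneg F]) fun x =>
    calc ‖B (F x)‖ ≤ ‖B‖ * ‖F x‖ := B.le_opNorm _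
      _ ≤ ‖B‖ * (hnorm F * ‖x‖) := by gcongr; exact hF.norm_apply_le x
      _ = ‖B‖ * hnorm F * ‖x‖ := by ring

end BddHomOp

namespace ContinuousLinearMap

variable {𝕜 E : Type*} [NontriviallyNormedField 𝕜] [NormedAddCommGroup E] [NormedSpace 𝕜 E]

theorem ring_inverse_apply_apply {A : E →L[𝕜] E} (hA : IsUnit A) (x : E) :
    Ring.inverse A (A x) = x := by
  rw [← mul_apply_eq_comp, Ring.inverse_mul_cancel _ hA, one_apply_eq_self]

theorem apply_ring_inverse_apply {A : E →L[𝕜] E} (hA : IsUnit A) (x : E) :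
    A (Ring.inverse A x) = x := by
  rw [← mul_apply_eq_comp, Ring.mul_inverse_cancel _ hA, one_apply_eq_self]

end ContinuousLinearMap

theorem isUnit_one_add_of_norm_lt_one {R : Type*} [NormedRing R] [HasSummableGeomSeries R] {x : R}
    (h : ‖x‖ < 1) : IsUnit (1 + x) := by
  simpa using isUnit_one_sub_of_norm_lt_one (x := -x) (by rwa [norm_neg])

theorem ContinuousLinearMap.norm_ring_inverse_one_add_le {𝕜 E : Type*} [NontriviallyNormedField 𝕜]
    [NormedAddCommGroup E] [NormedSpace 𝕜 E] [CompleteSpace E] {A : E →L[𝕜] E} (hA : ‖A‖ < 1) :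
    ‖Ring.inverse (1 + A)‖ ≤ (1 - ‖A‖)⁻¹ := by
  have hA' : ‖-A‖ < 1 := by rwa [norm_neg]
  calc ‖Ring.inverse (1 + A)‖ = ‖∑' n, (-A) ^ n‖ := by
        rw [geom_series_eq_inverse _ hA', sub_neg_eq_add]
    _ ≤ ‖(1 : E →L[𝕜] E)‖ - 1 + (1 - ‖-A‖)⁻¹ := tsum_geometric_le_of_norm_lt_one _ hA'
    _ ≤ (1 - ‖A‖)⁻¹ := by
        have h1 : ‖(1 : E →L[𝕜] E)‖ ≤ 1 := by rw [one_def]; exact norm_id_le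
        rw [norm_neg]
        linarith

theorem ContinuousLinearMap.isClosed_range_of_bounded_innerInverse {𝕜 E F : Type*}
    [NontriviallyNormedField 𝕜] [NormedAddCommGroup E] [NormedSpace 𝕜 E] [CompleteSpace E]
    [NormedAddCommGroup F] [NormedSpace 𝕜 F] (f : E →L[𝕜] F) {G : F → E}
    (hG : ∀ x, f (G (f x)) = f x) {C : ℝ} (hC : ∀ y, ‖G y‖ ≤ C * ‖y‖) :
    IsClosed (Set.range f) := by
  let g := (f : E →+ F).mkNormedAddGroupHom ‖f‖ f.le_opNorm
  have hrange : (g.range : Set F) = Set.range f := rfl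
  have hsurj : g.SurjectiveOnWith g.range (max C 1) := by
    rintro _ ⟨x, rfl⟩
    exact ⟨G (f x), hG x,
      (hC _).trans (mul_le_mul_of_nonneg_right (le_max_left _ _) (norm_nonneg _))⟩
  refine isClosed_of_closure_subset fun y hy => ?_
  obtain ⟨x, hx, -⟩ := controlled_closure_of_complete (by positivity) one_pos hsurj y
    (by rwa [← SetLike.mem_coe, AddSubgroup.topologicalClosure_coe, hrange])
  exact ⟨x, hx⟩

def moorePenroseOf (G : Y → X) (πK : X → X) (πR : Y → Y) (y : Y) : X :=
  G (πR y) - πK (G (πR y))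

section MoorePenrose

variable {S : X →L[ℝ] Y} {G : Y → X} {πK : X → X} {πR : Y → Y}

theorem map_moorePenroseOf (hπK : IsMetricProjOn {x | S x = 0} πK)
    (hπR : IsMetricProjOn (Set.range S) πR) (hG : ∀ x, S (G (S x)) = S x) (y : Y) :
    S (moorePenroseOf G πK πR y) = πR y := by
  obtain ⟨x, hx⟩ := (hπR y).1
  have hker : S (πK (G (πR y))) = 0 := (hπK _).1
  rw [moorePenroseOf, map_sub, hker, sub_zero, ← hx, hG]

theorem moorePenroseOf_map (hK : IsChebyshev {x | S x = 0})
    (hπK : IsMetricProjOn {x | S x = 0} πK) (hR : IsChebyshev (Set.range S))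
    (hπR : IsMetricProjOn (Set.range S) πR) (hG : ∀ x, S (G (S x)) = S x) (x : X) :
    moorePenroseOf G πK πR (S x) = x - πK x := by
  obtain ⟨k, hk, hGk⟩ : ∃ k ∈ (S : X →ₗ[ℝ] Y).ker, G (S x) = x + k :=
    ⟨G (S x) - x, by simp [hG], (add_sub_cancel _ _).symm⟩
  have hSx : πR (S x) = S x := hπR.apply_of_mem (K := (S : X →ₗ[ℝ] Y).range) hR ⟨x, rfl⟩
  rw [moorePenroseOf, hSx, hGk,
    hπK.apply_add_of_mem (K := (S : X →ₗ[ℝ] Y).ker) hK x hk]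
  abel

theorem map_moorePenroseOf_map (hK : IsChebyshev {x | S x = 0})
    (hπK : IsMetricProjOn {x | S x = 0} πK) (hR : IsChebyshev (Set.range S))
    (hπR : IsMetricProjOn (Set.range S) πR) (hG : ∀ x, S (G (S x)) = S x) (x : X) :
    S (moorePenroseOf G πK πR (S x)) = S x := by
  have hker : S (πK x) = 0 := (hπK x).1
  rw [moorePenroseOf_map hK hπK hR hπR hG, map_sub, hker, sub_zero]

theorem moorePenroseOf_map_moorePenroseOf (hK : IsChebyshev {x | S x = 0})
    (hπK : IsMetricProjOn {x | S x = 0} πK) (hR : IsChebyshev (Set.range S))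
    (hπR : IsMetricProjOn (Set.range S) πR) (hG : ∀ x, S (G (S x)) = S x) (y : Y) :
    moorePenroseOf G πK πR (S (moorePenroseOf G πK πR y)) = moorePenroseOf G πK πR y := by
  rw [moorePenroseOf_map hK hπK hR hπR hG, moorePenroseOf,
    hπK.apply_sub_apply (K := (S : X →ₗ[ℝ] Y).ker) hK, sub_zero]

theorem norm_moorePenroseOf_le (hπK : IsMetricProjOn {x | S x = 0} πK)
    (hπR : IsMetricProjOn (Set.range S) πR) (hG : BddHomOp G) (y : Y) :
    ‖moorePenroseOf G πK πR y‖ ≤ 2 * hnorm G * ‖y‖ :=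
  calc ‖moorePenroseOf G πK πR y‖ ≤ ‖G (πR y)‖ :=
        hπK.norm_sub_apply_le (K := (S : X →ₗ[ℝ] Y).ker) _
    _ ≤ hnorm G * ‖πR y‖ := hG.norm_apply_le _
    _ ≤ hnorm G * (2 * ‖y‖) := by
        gcongr
        · exact hnorm_nonneg G
        · exact hπR.norm_apply_le (K := (S : X →ₗ[ℝ] Y).range) y
    _ = 2 * hnorm G * ‖y‖ := by ring

theorem bddHomOp_moorePenroseOf (hK : IsChebyshev {x | S x = 0})
    (hπK : IsMetricProjOn {x | S x = 0} πK) (hR : IsChebyshev (Set.range S))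
    (hπR : IsMetricProjOn (Set.range S) πR) (hG : BddHomOp G) :
    BddHomOp (moorePenroseOf G πK πR) := by
  refine ⟨fun c y => ?_, _, norm_moorePenroseOf_le hπK hπR hG⟩
  rw [moorePenroseOf, moorePenroseOf, hπR.apply_smul (K := (S : X →ₗ[ℝ] Y).range) hR, hG.1,
    hπK.apply_smul (K := (S : X →ₗ[ℝ] Y).ker) hK, smul_sub]

theorem hnorm_moorePenroseOf_le (hπK : IsMetricProjOn {x | S x = 0} πK)
    (hπR : IsMetricProjOn (Set.range S) πR) (hG : BddHomOp G) :
    hnorm (moorePenroseOf G πK πR) ≤ 2 * hnorm G :=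
  hnorm_le_of_forall (by positivity [hnorm_nonneg G]) (norm_moorePenroseOf_le hπK hπR hG)

end MoorePenrose

section Perturbation

variable {T δT : X →L[ℝ] Y} {TM : Y → X} {πN : X → X} {A : X →L[ℝ] X}

theorem genInv_add_apply (hq : QuasiAdditiveOn TM (Set.range δT))
    (hTM4 : ∀ x, TM (T x) = x - πN x) (hA : ∀ x, A x = TM (δT x)) (x : X) :
    TM ((T + δT) x) = (1 + A) x - πN x := by
  rw [add_apply, hq _ _ ⟨x, rfl⟩, hTM4, ← hA, add_apply, one_apply_eq_self]
  abel

theorem proj_genInv_eq_zero (hTM2 : ∀ y, TM (T (TM y)) = TM y)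
    (hTM4 : ∀ x, TM (T x) = x - πN x) (y : Y) : πN (TM y) = 0 := by
  have h := hTM4 (TM y)
  rwa [hTM2, eq_comm, sub_eq_self] at h

theorem proj_ring_inverse_one_add_apply (hN : IsChebyshev {x | T x = 0})
    (hπN : IsMetricProjOn {x | T x = 0} πN) (hTM2 : ∀ y, TM (T (TM y)) = TM y)
    (hTM4 : ∀ x, TM (T x) = x - πN x) (hA : ∀ x, A x = TM (δT x)) (hu : IsUnit (1 + A))
    {n : X} (hn : T n = 0) : πN (Ring.inverse (1 + A) n) = n := by
  set u := Ring.inverse (1 + A) n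
  have hu_eq : u = -TM (δT u) + n := by
    have h := ContinuousLinearMap.apply_ring_inverse_apply hu n
    rw [add_apply, one_apply_eq_self, hA] at h
    rw [← h]
    abel
  rw [hu_eq, hπN.apply_add_of_mem (K := (T : X →ₗ[ℝ] Y).ker) hN _ hn,
    hπN.apply_neg (K := (T : X →ₗ[ℝ] Y).ker) hN, proj_genInv_eq_zero hTM2 hTM4, neg_zero,
    zero_add]

theorem add_apply_ring_inverse_one_add_apply (hN : IsChebyshev {x | T x = 0})
    (hπN : IsMetricProjOn {x | T x = 0} πN) (hTM2 : ∀ y, TM (T (TM y)) = TM y)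
    (hTM4 : ∀ x, TM (T x) = x - πN x) (hq : QuasiAdditiveOn TM (Set.range δT))
    (hA : ∀ x, A x = TM (δT x)) (hu : IsUnit (1 + A))
    (hstab : Set.range (T + δT) ∩ {y : Y | TM y = 0} = {0}) {n : X} (hn : T n = 0) :
    (T + δT) (Ring.inverse (1 + A) n) = 0 := by
  have h : TM ((T + δT) (Ring.inverse (1 + A) n)) = 0 := by
    rw [genInv_add_apply hq hTM4 hA, ContinuousLinearMap.apply_ring_inverse_apply hu,
      proj_ring_inverse_one_add_apply hN hπN hTM2 hTM4 hA hu hn, sub_self]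
  have hmem : (T + δT) (Ring.inverse (1 + A) n) ∈ Set.range (T + δT) ∩ {y | TM y = 0} :=
    ⟨⟨_, rfl⟩, h⟩
  rwa [hstab] at hmem

theorem add_apply_ring_inverse_genInv_add_apply (hN : IsChebyshev {x | T x = 0})
    (hπN : IsMetricProjOn {x | T x = 0} πN) (hTM2 : ∀ y, TM (T (TM y)) = TM y)
    (hTM4 : ∀ x, TM (T x) = x - πN x) (hq : QuasiAdditiveOn TM (Set.range δT))
    (hA : ∀ x, A x = TM (δT x)) (hu : IsUnit (1 + A))
    (hstab : Set.range (T + δT) ∩ {y : Y | TM y = 0} = {0}) (x : X) :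
    (T + δT) (Ring.inverse (1 + A) (TM ((T + δT) x))) = (T + δT) x := by
  rw [genInv_add_apply hq hTM4 hA, map_sub, ContinuousLinearMap.ring_inverse_apply_apply hu,
    map_sub, add_apply_ring_inverse_one_add_apply hN hπN hTM2 hTM4 hq hA hu hstab (hπN x).1,
    sub_zero]

end Perturbation

theorem stmt_11_general [CompleteSpace X] (T δT : X →L[ℝ] Y)
    (hN : IsChebyshev {x : X | T x = 0})
    (πN : X → X) (hπN : IsMetricProjOn {x : X | T x = 0} πN)
    (TM : Y → X) (hTM : BddHomOp TM)
    (hTM2 : ∀ y, TM (T (TM y)) = TM y)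
    (hTM4 : ∀ x, TM (T x) = x - πN x)
    (hq : QuasiAdditiveOn TM (Set.range ⇑δT))
    (A : X →L[ℝ] X) (hA : ∀ x, A x = TM (δT x)) (hAn : ‖A‖ < 1)
    (hNb : IsChebyshev {x : X | (T + δT) x = 0})
    (hRb : IsChebyshev (closure (Set.range ⇑(T + δT))))
    (πNb : X → X) (hπNb : IsMetricProjOn {x : X | (T + δT) x = 0} πNb)
    (πRb : Y → Y) (hπRb : IsMetricProjOn (closure (Set.range ⇑(T + δT))) πRb)
    (hstab : Set.range ⇑(T + δT) ∩ {y : Y | TM y = 0} = {0}) :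
    IsClosed (Set.range ⇑(T + δT)) ∧
    ∃ TbM : Y → X,
      (∀ y, TbM y = Ring.inverse (1 + A) (TM (πRb y)) -
        πNb (Ring.inverse (1 + A) (TM (πRb y)))) ∧
      BddHomOp TbM ∧
      (∀ x, (T + δT) (TbM ((T + δT) x)) = (T + δT) x) ∧
      (∀ y, TbM ((T + δT) (TbM y)) = TbM y) ∧
      (∀ y, (T + δT) (TbM y) = πRb y) ∧
      (∀ x, TbM ((T + δT) x) = x - πNb x) ∧
      hnorm TbM ≤ 2 * hnorm TM / (1 - ‖A‖) := by
  set G : Y → X := fun y => Ring.inverse (1 + A) (TM y)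
  have hG : ∀ x, (T + δT) (G ((T + δT) x)) = (T + δT) x :=
    add_apply_ring_inverse_genInv_add_apply hN hπN hTM2 hTM4 hq hA
      (isUnit_one_add_of_norm_lt_one hAn) hstab
  have hGbdd : BddHomOp G := hTM.clm_comp_s11 _
  obtain ⟨C, hC⟩ := hGbdd.2
  have hclosed : IsClosed (Set.range (T + δT)) :=
    (T + δT).isClosed_range_of_bounded_innerInverse hG hC
  rw [hclosed.closure_eq] at hRb hπRb
  refine ⟨hclosed, moorePenroseOf G πNb πRb, fun _ => rfl,
    bddHomOp_moorePenroseOf hNb hπNb hRb hπRb hGbdd,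
    map_moorePenroseOf_map hNb hπNb hRb hπRb hG,
    moorePenroseOf_map_moorePenroseOf hNb hπNb hRb hπRb hG,
    map_moorePenroseOf hπNb hπRb hG, moorePenroseOf_map hNb hπNb hRb hπRb hG, ?_⟩
  calc hnorm (moorePenroseOf G πNb πRb)
        ≤ 2 * hnorm G := hnorm_moorePenroseOf_le hπNb hπRb hGbdd
    _ ≤ 2 * (‖Ring.inverse (1 + A)‖ * hnorm TM) := by gcongr; exact hTM.hnorm_clm_comp_le _
    _ ≤ 2 * ((1 - ‖A‖)⁻¹ * hnorm TM) := by
        gcongr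
        · exact hnorm_nonneg TM
        · exact ContinuousLinearMap.norm_ring_inverse_one_add_le hAn
    _ = 2 * hnorm TM / (1 - ‖A‖) := by ring

theorem stmt_11 [CompleteSpace X] [CompleteSpace Y] (T δT : X →L[ℝ] Y) (hT : T ≠ 0)
    (hcl : IsClosed (Set.range ⇑T))
    (hN : IsChebyshev {x : X | T x = 0}) (hR : IsChebyshev (Set.range ⇑T))
    (πN : X → X) (hπN : IsMetricProjOn {x : X | T x = 0} πN)
    (πR : Y → Y) (hπR : IsMetricProjOn (Set.range ⇑T) πR)
    (TM : Y → X) (hTM : BddHomOp TM)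
    (hTM1 : ∀ x, T (TM (T x)) = T x) (hTM2 : ∀ y, TM (T (TM y)) = TM y)
    (hTM3 : ∀ y, T (TM y) = πR y) (hTM4 : ∀ x, TM (T x) = x - πN x)
    (hq : QuasiAdditiveOn TM (Set.range ⇑δT))
    (A : X →L[ℝ] X) (hA : ∀ x, A x = TM (δT x)) (hAn : ‖A‖ < 1)
    (hNb : IsChebyshev {x : X | (T + δT) x = 0})
    (hRb : IsChebyshev (closure (Set.range ⇑(T + δT))))
    (πNb : X → X) (hπNb : IsMetricProjOn {x : X | (T + δT) x = 0} πNb)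
    (πRb : Y → Y) (hπRb : IsMetricProjOn (closure (Set.range ⇑(T + δT))) πRb)
    (hstab : Set.range ⇑(T + δT) ∩ {y : Y | TM y = 0} = {0}) :
    IsClosed (Set.range ⇑(T + δT)) ∧
    ∃ TbM : Y → X,
      (∀ y, TbM y = Ring.inverse (1 + A) (TM (πRb y)) -
        πNb (Ring.inverse (1 + A) (TM (πRb y)))) ∧
      BddHomOp TbM ∧
      (∀ x, (T + δT) (TbM ((T + δT) x)) = (T + δT) x) ∧
      (∀ y, TbM ((T + δT) (TbM y)) = TbM y) ∧
      (∀ y, (T + δT) (TbM y) = πRb y) ∧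
      (∀ x, TbM ((T + δT) x) = x - πNb x) ∧
      hnorm TbM ≤ 2 * hnorm TM / (1 - ‖A‖) :=
  stmt_11_general T δT hN πN hπN TM hTM hTM2 hTM4 hq A hA hAn hNb hRb πNb hπNb πRb hπRb hstab
end
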